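/- arXiv:0802.2843 — 2 statements merged into one kernel-verified Lean document; each statement's English description precedes it below -/
import Mathlib

section
/- For every function f : [n] → [n] and every positive integer d, there exists a set A of at most d permutations of [n] such that for each r ∈ [n], either some π ∈ A satisfies π(r) = f(r), or the fiber f⁻¹(f(r)) has more than d elements. -/
/-!
Number the elements of each fiber of `f` in increasing order, starting from `0`. On the elements
with a given number `i`, `f` is injective, so it agrees there with some permutation `σᵢ`.
An element whose fiber has at most `d` elements has number less than `d`, hence is covered by
one of `σ₀, …, σ_{d-1}`.
-/

open Finset

theorem Set.InjOn.exists_perm_eqOn {α : Type*} {g : α → α} {s : Set α} [Finite s]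
    (h : InjOn g s) : ∃ σ : Equiv.Perm α, EqOn σ g s :=
  let ⟨σ, hσ⟩ := Equiv.Perm.exists_extending_pair (fun x : s => (x : α)) (s.domRestrict g)
    Subtype.val_injective h.injective
  ⟨σ, fun x hx => hσ ⟨x, hx⟩⟩

section FiberRank

variable {α β : Type*} [Fintype α] [LinearOrder α] [DecidableEq β]

def fiberRank (f : α → β) (a : α) : ℕ :=
  #{b | f b = f a ∧ b < a}

theorem fiberRank_lt_fiberRank {f : α → β} {a a' : α} (hf : f a = f a') (h : a < a') :
    fiberRank f a < fiberRank f a' := by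
  refine card_lt_card <| (ssubset_iff_of_subset fun b => ?_).2 ⟨a, by simp [hf, h], by simp⟩
  simp only [mem_filter, mem_univ, true_and]
  exact fun hb => ⟨hb.1.trans hf, hb.2.trans h⟩

theorem injOn_setOf_fiberRank_eq (f : α → β) (i : ℕ) :
    Set.InjOn f {a | fiberRank f a = i} := by
  intro a ha a' ha' hf
  have hrank : fiberRank f a = fiberRank f a' := ha.trans ha'.symm
  rcases lt_trichotomy a a' with h | h | h
  · exact absurd hrank (fiberRank_lt_fiberRank hf h).ne
  · exact h
  · exact absurd hrank (fiberRank_lt_fiberRank hf.symm h).ne'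

theorem fiberRank_lt_card_fiber (f : α → β) (a : α) : fiberRank f a < #{b | f b = f a} := by
  refine card_lt_card <| (ssubset_iff_of_subset fun b => ?_).2 ⟨a, by simp, by simp⟩
  simp only [mem_filter, mem_univ, true_and]
  exact And.left

end FiberRank

theorem perm_cover_general (n d : ℕ) (f : Fin n → Fin n) :
    ∃ A : Finset (Equiv.Perm (Fin n)), A.card ≤ d ∧
      ∀ r : Fin n, (∃ π ∈ A, π r = f r) ∨
        d < (Finset.univ.filter fun s => f s = f r).card := by
  choose σ hσ using fun i => (injOn_setOf_fiberRank_eq f i).exists_perm_eqOn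
  refine ⟨(range d).image σ, card_image_le.trans (card_range d).le, fun r => ?_⟩
  refine or_iff_not_imp_right.2 fun hsmall => ⟨σ (fiberRank f r), ?_, hσ _ rfl⟩
  exact mem_image_of_mem σ (mem_range.2 ((fiberRank_lt_card_fiber f r).trans_le (not_lt.1 hsmall)))

/-- For every `f : [n] → [n]` and positive `d`, there is a set of at most `d`
permutations of `[n]` that `d`-covers `f`. -/
theorem perm_cover (n d : ℕ) (hd : 0 < d) (f : Fin n → Fin n) :
    ∃ A : Finset (Equiv.Perm (Fin n)), A.card ≤ d ∧
      ∀ r : Fin n, (∃ π ∈ A, π r = f r) ∨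
        d < (Finset.univ.filter fun s => f s = f r).card :=
  perm_cover_general n d f
end

section
/- If T ⊆ {0,1}ⁿ is uncrossed (contains no crossing pair), then T contains at most 2 strings of weight exactly n/2. -/
/-!
Read as subsets of `Fin n`, a non-crossing pair is nested (`x ≤ y` or `y ≤ x`), disjoint, or
covering. Two distinct strings of the same weight `n / 2` cannot be nested, and in the other two
cases the weight count forces `y = xᶜ`. So all strings of weight `n / 2` in an uncrossed set lie
in `{x, xᶜ}`.
-/

/-- A pair `(x,x')` is crossing if all four index sets `I_{ab}` are nonempty. -/
def Crossing {n : ℕ} (x x' : Fin n → Bool) : Prop :=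
  ∀ a b : Bool, ∃ j : Fin n, x j = a ∧ x' j = b

section Weight

variable {ι : Type*} [Fintype ι]

def weight (x : ι → Bool) : ℕ := (Finset.univ.filter fun i => x i = true).card

theorem weight_compl (x : ι → Bool) : weight xᶜ = Fintype.card ι - weight x := by
  classical
  rw [weight, weight, ← Finset.card_compl]
  congr 1
  ext i
  simp

theorem eq_of_le_of_weight_le {x y : ι → Bool} (hxy : x ≤ y) (hw : weight y ≤ weight x) :
    x = y := by
  have hsub : (Finset.univ.filter fun i => x i = true) ⊆ Finset.univ.filter fun i => y i = true :=
    Finset.monotone_filter_right _ fun i _ => Bool.le_iff_imp.mp (hxy i)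
  have hset := Finset.eq_of_subset_of_card_le hsub hw
  funext i
  simpa using congrArg (i ∈ ·) hset

end Weight

/-- The four disjuncts say that `I₁₀`, `I₀₁`, `I₁₁` and `I₀₀` respectively are empty. -/
theorem not_crossing_iff {n : ℕ} {x y : Fin n → Bool} :
    ¬ Crossing x y ↔ x ≤ y ∨ y ≤ x ∨ Disjoint x y ∨ Codisjoint x y := by
  rw [← le_compl_iff_disjoint_right, codisjoint_iff_compl_le_left]
  simp only [Crossing, not_forall, not_exists, not_and, Bool.exists_bool, Pi.le_def,
    Pi.compl_apply, Bool.compl_eq_bnot, Bool.le_iff_imp]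
  grind

theorem eq_or_eq_compl_of_not_crossing {n : ℕ} (hn : Even n) {x y : Fin n → Bool}
    (hx : weight x = n / 2) (hy : weight y = n / 2) (hxy : ¬ Crossing x y) :
    y = x ∨ y = xᶜ := by
  have hyc : weight yᶜ = n / 2 := by rw [weight_compl, Fintype.card_fin, hy]; grind
  rcases not_crossing_iff.mp hxy with h | h | h | h
  · exact .inl (eq_of_le_of_weight_le h (by omega)).symm
  · exact .inl (eq_of_le_of_weight_le h (by omega))
  · exact .inr <| eq_compl_comm.mp <|
      eq_of_le_of_weight_le (le_compl_iff_disjoint_right.mpr h) (by omega)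
  · exact .inr <| (compl_eq_comm.mp <|
      eq_of_le_of_weight_le (codisjoint_iff_compl_le_left.mp h) (by omega)).symm

/-- An uncrossed set contains at most two strings of weight `n/2`. -/
theorem uncrossed_half_weight (n : ℕ) (hn : Even n) (T : Finset (Fin n → Bool))
    (hT : ∀ x ∈ T, ∀ x' ∈ T, x ≠ x' → ¬ Crossing x x') :
    (T.filter fun x => (Finset.univ.filter fun j => x j = true).card = n / 2).card ≤ 2 := by
  change (T.filter fun x => weight x = n / 2).card ≤ 2
  set S := T.filter fun x => weight x = n / 2
  obtain hempty | ⟨x, hx⟩ := S.eq_empty_or_nonempty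
  · simp [hempty]
  have hS : S ⊆ {x, xᶜ} := by
    intro y hy
    obtain ⟨hxT, hxw⟩ := Finset.mem_filter.mp hx
    obtain ⟨hyT, hyw⟩ := Finset.mem_filter.mp hy
    by_cases hxy : x = y
    · simp [hxy]
    · simpa using eq_or_eq_compl_of_not_crossing hn hxw hyw (hT x hxT y hyT hxy)
  exact (Finset.card_le_card hS).trans Finset.card_le_two
end
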